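/- arXiv:0810.4530 — 5 statements merged into one kernel-verified Lean document; each statement's English description precedes it below -/
import Mathlib

section
/- For t ∈ ℝ, the bilinear skew-symmetric bracket μ_t on ℝ^8 defined on the standard basis e_1,…,e_8 by μ_t(e_1,e_j) = e_{j+1} for j = 2,…,7, μ_t(e_2,e_3) = t e_5, μ_t(e_2,e_4) = t e_6, μ_t(e_2,e_5) = (t−1) e_7, μ_t(e_2,e_6) = (t−2) e_8, μ_t(e_3,e_4) = e_7, μ_t(e_3,e_5) = e_8 (all other brackets of basis vectors zero, extended by skew-symmetry) satisfies the Jacobi identity, i.e., (ℝ^8, μ_t) is a Lie algebra. -/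
noncomputable section

/-- The `k`-th standard basis vector of `ℝ⁸` (`0`-based: `e 0` is `e₁` of the paper). -/
def e (k : ℕ) : Fin 8 → ℝ := fun m => if (m : ℕ) = k then 1 else 0

/-- Structure constants of `μ_t` for `i < j` (0-based indices). -/
def cplus (t : ℝ) (i j : ℕ) : Fin 8 → ℝ :=
  if i = 0 ∧ 1 ≤ j ∧ j ≤ 6 then e (j + 1)
  else if i = 1 ∧ j = 2 then t • e 4
  else if i = 1 ∧ j = 3 then t • e 5
  else if i = 1 ∧ j = 4 then (t - 1) • e 6
  else if i = 1 ∧ j = 5 then (t - 2) • e 7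
  else if i = 2 ∧ j = 3 then e 6
  else if i = 2 ∧ j = 4 then e 7
  else 0

/-- Skew-symmetric structure constants. -/
def cst (t : ℝ) (i j : ℕ) : Fin 8 → ℝ :=
  if i < j then cplus t i j else if j < i then -cplus t j i else 0

/-- The bracket `μ_t` on `ℝ⁸`, extended bilinearly from the structure constants. -/
def mu (t : ℝ) (x y : Fin 8 → ℝ) : Fin 8 → ℝ :=
  fun k => ∑ i : Fin 8, ∑ j : Fin 8, x i * y j * cst t (i : ℕ) (j : ℕ) k


lemma fv0 : ((0:Fin 8):ℕ) = 0 := rfl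
lemma fv1 : ((1:Fin 8):ℕ) = 1 := rfl
lemma fv2 : ((2:Fin 8):ℕ) = 2 := rfl
lemma fv3 : ((3:Fin 8):ℕ) = 3 := rfl
lemma fv4 : ((4:Fin 8):ℕ) = 4 := rfl
lemma fv5 : ((5:Fin 8):ℕ) = 5 := rfl
lemma fv6 : ((6:Fin 8):ℕ) = 6 := rfl
lemma fv7 : ((7:Fin 8):ℕ) = 7 := rfl

lemma v8_0 (a0 a1 a2 a3 a4 a5 a6 a7 : ℝ) : ![a0,a1,a2,a3,a4,a5,a6,a7] (0:Fin 8) = a0 := rfl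
lemma v8_1 (a0 a1 a2 a3 a4 a5 a6 a7 : ℝ) : ![a0,a1,a2,a3,a4,a5,a6,a7] (1:Fin 8) = a1 := rfl
lemma v8_2 (a0 a1 a2 a3 a4 a5 a6 a7 : ℝ) : ![a0,a1,a2,a3,a4,a5,a6,a7] (2:Fin 8) = a2 := rfl
lemma v8_3 (a0 a1 a2 a3 a4 a5 a6 a7 : ℝ) : ![a0,a1,a2,a3,a4,a5,a6,a7] (3:Fin 8) = a3 := rfl
lemma v8_4 (a0 a1 a2 a3 a4 a5 a6 a7 : ℝ) : ![a0,a1,a2,a3,a4,a5,a6,a7] (4:Fin 8) = a4 := rfl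
lemma v8_5 (a0 a1 a2 a3 a4 a5 a6 a7 : ℝ) : ![a0,a1,a2,a3,a4,a5,a6,a7] (5:Fin 8) = a5 := rfl
lemma v8_6 (a0 a1 a2 a3 a4 a5 a6 a7 : ℝ) : ![a0,a1,a2,a3,a4,a5,a6,a7] (6:Fin 8) = a6 := rfl
lemma v8_7 (a0 a1 a2 a3 a4 a5 a6 a7 : ℝ) : ![a0,a1,a2,a3,a4,a5,a6,a7] (7:Fin 8) = a7 := rfl

set_option maxHeartbeats 2000000 in
lemma mu_eq (t : ℝ) (x y : Fin 8 → ℝ) :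
    mu t x y = ![0, 0, x 0 * y 1 - x 1 * y 0, x 0 * y 2 - x 2 * y 0,
      (x 0 * y 3 - x 3 * y 0) + t * (x 1 * y 2 - x 2 * y 1),
      (x 0 * y 4 - x 4 * y 0) + t * (x 1 * y 3 - x 3 * y 1),
      (x 0 * y 5 - x 5 * y 0) + (t - 1) * (x 1 * y 4 - x 4 * y 1) + (x 2 * y 3 - x 3 * y 2),
      (x 0 * y 6 - x 6 * y 0) + (t - 2) * (x 1 * y 5 - x 5 * y 1) + (x 2 * y 4 - x 4 * y 2)] := by
  funext k
  fin_cases k <;>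
  · simp only [mu, Fin.sum_univ_eight, Fin.isValue, fv0, fv1, fv2, fv3, fv4, fv5, fv6, fv7]
    norm_num [cst, cplus, e]
    try ring

/-- `μ_t` satisfies the Jacobi identity, so `(ℝ⁸, μ_t)` is a Lie algebra. -/
theorem stmt5 (t : ℝ) (x y z : Fin 8 → ℝ) :
    mu t x (mu t y z) + mu t y (mu t z x) + mu t z (mu t x y) = 0 := by
  rw [mu_eq t y z, mu_eq t z x, mu_eq t x y, mu_eq, mu_eq, mu_eq]
  funext k
  fin_cases k <;>
  · simp [Pi.add_apply, Pi.zero_apply, Fin.isValue,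
      v8_0, v8_1, v8_2, v8_3, v8_4, v8_5, v8_6, v8_7]
    try ring

end
end

section
/- For t, s ∈ ℝ, the Lie algebras n_t = (ℝ^8, μ_t) and n_s = (ℝ^8, μ_s) are isomorphic if and only if t = s, where μ_t is defined by μ_t(e_1,e_j) = e_{j+1} for j = 2,…,7, μ_t(e_2,e_3) = t e_5, μ_t(e_2,e_4) = t e_6, μ_t(e_2,e_5) = (t−1) e_7, μ_t(e_2,e_6) = (t−2) e_8, μ_t(e_3,e_4) = e_7, μ_t(e_3,e_5) = e_8. -/
noncomputable section

lemma f0 : ((0 : Fin 8) : ℕ) = 0 := rfl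
lemma f1 : ((1 : Fin 8) : ℕ) = 1 := rfl
lemma f2 : ((2 : Fin 8) : ℕ) = 2 := rfl
lemma f3 : ((3 : Fin 8) : ℕ) = 3 := rfl
lemma f4 : ((4 : Fin 8) : ℕ) = 4 := rfl
lemma f5 : ((5 : Fin 8) : ℕ) = 5 := rfl
lemma f6 : ((6 : Fin 8) : ℕ) = 6 := rfl
lemma f7 : ((7 : Fin 8) : ℕ) = 7 := rfl

set_option maxHeartbeats 2000000 in
lemma mu_c0 (t : ℝ) (x y : Fin 8 → ℝ) : mu t x y 0 = 0 := by
  simp only [mu, Fin.sum_univ_eight, f0, f1, f2, f3, f4, f5, f6, f7]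
  norm_num [cst, cplus, e, f0, f1, f2, f3, f4, f5, f6, f7]

set_option maxHeartbeats 2000000 in
lemma mu_c1 (t : ℝ) (x y : Fin 8 → ℝ) : mu t x y 1 = 0 := by
  simp only [mu, Fin.sum_univ_eight, f0, f1, f2, f3, f4, f5, f6, f7]
  norm_num [cst, cplus, e, f0, f1, f2, f3, f4, f5, f6, f7]

set_option maxHeartbeats 2000000 in
lemma mu_c2 (t : ℝ) (x y : Fin 8 → ℝ) : mu t x y 2 = x 0 * y 1 - x 1 * y 0 := by
  simp only [mu, Fin.sum_univ_eight, f0, f1, f2, f3, f4, f5, f6, f7]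
  norm_num [cst, cplus, e, f0, f1, f2, f3, f4, f5, f6, f7]; ring

set_option maxHeartbeats 2000000 in
lemma mu_c3 (t : ℝ) (x y : Fin 8 → ℝ) : mu t x y 3 = x 0 * y 2 - x 2 * y 0 := by
  simp only [mu, Fin.sum_univ_eight, f0, f1, f2, f3, f4, f5, f6, f7]
  norm_num [cst, cplus, e, f0, f1, f2, f3, f4, f5, f6, f7]; ring

set_option maxHeartbeats 2000000 in
lemma mu_c4 (t : ℝ) (x y : Fin 8 → ℝ) :
    mu t x y 4 = x 0 * y 3 - x 3 * y 0 + t * (x 1 * y 2 - x 2 * y 1) := by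
  simp only [mu, Fin.sum_univ_eight, f0, f1, f2, f3, f4, f5, f6, f7]
  norm_num [cst, cplus, e, f0, f1, f2, f3, f4, f5, f6, f7]; ring

set_option maxHeartbeats 2000000 in
lemma mu_c5 (t : ℝ) (x y : Fin 8 → ℝ) :
    mu t x y 5 = x 0 * y 4 - x 4 * y 0 + t * (x 1 * y 3 - x 3 * y 1) := by
  simp only [mu, Fin.sum_univ_eight, f0, f1, f2, f3, f4, f5, f6, f7]
  norm_num [cst, cplus, e, f0, f1, f2, f3, f4, f5, f6, f7]; ring

set_option maxHeartbeats 2000000 in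
lemma mu_c6 (t : ℝ) (x y : Fin 8 → ℝ) :
    mu t x y 6 = x 0 * y 5 - x 5 * y 0 + (t - 1) * (x 1 * y 4 - x 4 * y 1)
      + (x 2 * y 3 - x 3 * y 2) := by
  simp only [mu, Fin.sum_univ_eight, f0, f1, f2, f3, f4, f5, f6, f7]
  norm_num [cst, cplus, e, f0, f1, f2, f3, f4, f5, f6, f7]; ring

set_option maxHeartbeats 2000000 in
lemma mu_c7 (t : ℝ) (x y : Fin 8 → ℝ) :
    mu t x y 7 = x 0 * y 6 - x 6 * y 0 + (t - 2) * (x 1 * y 5 - x 5 * y 1)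
      + (x 2 * y 4 - x 4 * y 2) := by
  simp only [mu, Fin.sum_univ_eight, f0, f1, f2, f3, f4, f5, f6, f7]
  norm_num [cst, cplus, e, f0, f1, f2, f3, f4, f5, f6, f7]; ring

lemma ext8 {x y : Fin 8 → ℝ} (h0 : x 0 = y 0) (h1 : x 1 = y 1) (h2 : x 2 = y 2)
    (h3 : x 3 = y 3) (h4 : x 4 = y 4) (h5 : x 5 = y 5) (h6 : x 6 = y 6)
    (h7 : x 7 = y 7) : x = y := by
  funext m; fin_cases m <;> assumption

lemma b01 (t : ℝ) : mu t (e 0) (e 1) = e 2 := by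
  refine ext8 ?_ ?_ ?_ ?_ ?_ ?_ ?_ ?_ <;>
    simp [mu_c0, mu_c1, mu_c2, mu_c3, mu_c4, mu_c5, mu_c6, mu_c7, e,
      f0, f1, f2, f3, f4, f5, f6, f7]

lemma b02 (t : ℝ) : mu t (e 0) (e 2) = e 3 := by
  refine ext8 ?_ ?_ ?_ ?_ ?_ ?_ ?_ ?_ <;>
    simp [mu_c0, mu_c1, mu_c2, mu_c3, mu_c4, mu_c5, mu_c6, mu_c7, e,
      f0, f1, f2, f3, f4, f5, f6, f7]

lemma b03 (t : ℝ) : mu t (e 0) (e 3) = e 4 := by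
  refine ext8 ?_ ?_ ?_ ?_ ?_ ?_ ?_ ?_ <;>
    simp [mu_c0, mu_c1, mu_c2, mu_c3, mu_c4, mu_c5, mu_c6, mu_c7, e,
      f0, f1, f2, f3, f4, f5, f6, f7]

lemma b04 (t : ℝ) : mu t (e 0) (e 4) = e 5 := by
  refine ext8 ?_ ?_ ?_ ?_ ?_ ?_ ?_ ?_ <;>
    simp [mu_c0, mu_c1, mu_c2, mu_c3, mu_c4, mu_c5, mu_c6, mu_c7, e,
      f0, f1, f2, f3, f4, f5, f6, f7]

lemma b05 (t : ℝ) : mu t (e 0) (e 5) = e 6 := by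
  refine ext8 ?_ ?_ ?_ ?_ ?_ ?_ ?_ ?_ <;>
    simp [mu_c0, mu_c1, mu_c2, mu_c3, mu_c4, mu_c5, mu_c6, mu_c7, e,
      f0, f1, f2, f3, f4, f5, f6, f7]

lemma b06 (t : ℝ) : mu t (e 0) (e 6) = e 7 := by
  refine ext8 ?_ ?_ ?_ ?_ ?_ ?_ ?_ ?_ <;>
    simp [mu_c0, mu_c1, mu_c2, mu_c3, mu_c4, mu_c5, mu_c6, mu_c7, e,
      f0, f1, f2, f3, f4, f5, f6, f7]

lemma b12 (t : ℝ) : mu t (e 1) (e 2) = t • e 4 := by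
  refine ext8 ?_ ?_ ?_ ?_ ?_ ?_ ?_ ?_ <;>
    simp [mu_c0, mu_c1, mu_c2, mu_c3, mu_c4, mu_c5, mu_c6, mu_c7, e,
      f0, f1, f2, f3, f4, f5, f6, f7]

lemma b14 (t : ℝ) : mu t (e 1) (e 4) = (t - 1) • e 6 := by
  refine ext8 ?_ ?_ ?_ ?_ ?_ ?_ ?_ ?_ <;>
    simp [mu_c0, mu_c1, mu_c2, mu_c3, mu_c4, mu_c5, mu_c6, mu_c7, e,
      f0, f1, f2, f3, f4, f5, f6, f7]

/-- `(ℝ⁸, μ_t)` is isomorphic to `(ℝ⁸, μ_s)` if and only if `t = s`. -/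
theorem stmt6 (t s : ℝ) :
    (∃ g : (Fin 8 → ℝ) ≃ₗ[ℝ] (Fin 8 → ℝ), ∀ x y, g (mu t x y) = mu s (g x) (g y)) ↔ t = s := by
  constructor
  · rintro ⟨g, hg⟩
    have H01 : g (e 2) = mu s (g (e 0)) (g (e 1)) := by
      have h := hg (e 0) (e 1); rwa [b01] at h
    have H02 : g (e 3) = mu s (g (e 0)) (g (e 2)) := by
      have h := hg (e 0) (e 2); rwa [b02] at h
    have H03 : g (e 4) = mu s (g (e 0)) (g (e 3)) := by
      have h := hg (e 0) (e 3); rwa [b03] at h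
    have H04 : g (e 5) = mu s (g (e 0)) (g (e 4)) := by
      have h := hg (e 0) (e 4); rwa [b04] at h
    have H05 : g (e 6) = mu s (g (e 0)) (g (e 5)) := by
      have h := hg (e 0) (e 5); rwa [b05] at h
    have H06 : g (e 7) = mu s (g (e 0)) (g (e 6)) := by
      have h := hg (e 0) (e 6); rwa [b06] at h
    have H12 : t • g (e 4) = mu s (g (e 1)) (g (e 2)) := by
      have h := hg (e 1) (e 2); rwa [b12, map_smul] at h
    have H14 : (t - 1) • g (e 6) = mu s (g (e 1)) (g (e 4)) := by
      have h := hg (e 1) (e 4); rwa [b14, map_smul] at h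
    -- coordinates of g (e 2)
    have w20 : g (e 2) 0 = 0 := by rw [congrFun H01 0, mu_c0]
    have w21 : g (e 2) 1 = 0 := by rw [congrFun H01 1, mu_c1]
    have w22 : g (e 2) 2 = g (e 0) 0 * g (e 1) 1 - g (e 0) 1 * g (e 1) 0 := by
      rw [congrFun H01 2, mu_c2]
    -- g (e 3)
    have w30 : g (e 3) 0 = 0 := by rw [congrFun H02 0, mu_c0]
    have w31 : g (e 3) 1 = 0 := by rw [congrFun H02 1, mu_c1]
    have w32 : g (e 3) 2 = 0 := by rw [congrFun H02 2, mu_c2, w20, w21]; ring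
    have w33 : g (e 3) 3 = g (e 0) 0 * g (e 2) 2 := by
      rw [congrFun H02 3, mu_c3, w20]; ring
    -- g (e 4)
    have w40 : g (e 4) 0 = 0 := by rw [congrFun H03 0, mu_c0]
    have w41 : g (e 4) 1 = 0 := by rw [congrFun H03 1, mu_c1]
    have w42 : g (e 4) 2 = 0 := by rw [congrFun H03 2, mu_c2, w30, w31]; ring
    have w43 : g (e 4) 3 = 0 := by rw [congrFun H03 3, mu_c3, w30, w32]; ring
    have w44 : g (e 4) 4 = g (e 0) 0 * g (e 3) 3 := by
      rw [congrFun H03 4, mu_c4, w30, w31, w32]; ring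
    -- g (e 5)
    have w50 : g (e 5) 0 = 0 := by rw [congrFun H04 0, mu_c0]
    have w51 : g (e 5) 1 = 0 := by rw [congrFun H04 1, mu_c1]
    have w52 : g (e 5) 2 = 0 := by rw [congrFun H04 2, mu_c2, w40, w41]; ring
    have w53 : g (e 5) 3 = 0 := by rw [congrFun H04 3, mu_c3, w40, w42]; ring
    have w54 : g (e 5) 4 = 0 := by rw [congrFun H04 4, mu_c4, w40, w41, w42, w43]; ring
    have w55 : g (e 5) 5 = g (e 0) 0 * g (e 4) 4 := by
      rw [congrFun H04 5, mu_c5, w40, w41, w43]; ring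
    -- g (e 6)
    have w60 : g (e 6) 0 = 0 := by rw [congrFun H05 0, mu_c0]
    have w61 : g (e 6) 1 = 0 := by rw [congrFun H05 1, mu_c1]
    have w62 : g (e 6) 2 = 0 := by rw [congrFun H05 2, mu_c2, w50, w51]; ring
    have w63 : g (e 6) 3 = 0 := by rw [congrFun H05 3, mu_c3, w50, w52]; ring
    have w64 : g (e 6) 4 = 0 := by rw [congrFun H05 4, mu_c4, w50, w51, w52, w53]; ring
    have w65 : g (e 6) 5 = 0 := by rw [congrFun H05 5, mu_c5, w50, w51, w53, w54]; ring
    have w66 : g (e 6) 6 = g (e 0) 0 * g (e 5) 5 := by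
      rw [congrFun H05 6, mu_c6, w50, w51, w52, w53, w54]; ring
    -- g (e 7)
    have w70 : g (e 7) 0 = 0 := by rw [congrFun H06 0, mu_c0]
    have w71 : g (e 7) 1 = 0 := by rw [congrFun H06 1, mu_c1]
    have w72 : g (e 7) 2 = 0 := by rw [congrFun H06 2, mu_c2, w60, w61]; ring
    have w73 : g (e 7) 3 = 0 := by rw [congrFun H06 3, mu_c3, w60, w62]; ring
    have w74 : g (e 7) 4 = 0 := by rw [congrFun H06 4, mu_c4, w60, w61, w62, w63]; ring
    have w75 : g (e 7) 5 = 0 := by rw [congrFun H06 5, mu_c5, w60, w61, w63, w64]; ring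
    have w76 : g (e 7) 6 = 0 := by
      rw [congrFun H06 6, mu_c6, w60, w61, w62, w63, w64, w65]; ring
    have w77 : g (e 7) 7 = g (e 0) 0 * g (e 6) 6 := by
      rw [congrFun H06 7, mu_c7, w60, w61, w62, w64, w65]; ring
    -- nonvanishing
    have he7 : (e 7 : Fin 8 → ℝ) ≠ 0 := by
      intro h
      have h7 := congrFun h 7
      norm_num [e, f7] at h7
    have hv7 : g (e 7) ≠ 0 := by
      intro h
      exact he7 (g.injective (by rw [h, map_zero]))
    have hc7 : g (e 7) 7 ≠ 0 := by
      intro h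
      exact hv7 (ext8 w70 w71 w72 w73 w74 w75 w76 h)
    rw [w77] at hc7
    have ha : g (e 0) 0 ≠ 0 := left_ne_zero_of_mul hc7
    have h66 : g (e 6) 6 ≠ 0 := right_ne_zero_of_mul hc7
    rw [w66] at h66
    have h55 : g (e 5) 5 ≠ 0 := right_ne_zero_of_mul h66
    rw [w55] at h55
    have h44 : g (e 4) 4 ≠ 0 := right_ne_zero_of_mul h55
    rw [w44] at h44
    have h33 : g (e 3) 3 ≠ 0 := right_ne_zero_of_mul h44
    rw [w33] at h33
    have h22 : g (e 2) 2 ≠ 0 := right_ne_zero_of_mul h33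
    -- B 0 = 0
    have q3 := congrFun H12 3
    rw [mu_c3, Pi.smul_apply, smul_eq_mul, w43, w20] at q3
    have hB0 : g (e 1) 0 = 0 := by
      have h' : g (e 1) 0 * g (e 2) 2 = 0 := by linear_combination -q3
      exact (mul_eq_zero.mp h').resolve_right h22
    -- equation 1
    have q4 := congrFun H12 4
    rw [mu_c4, Pi.smul_apply, smul_eq_mul, w20, w21, hB0] at q4
    have E1 : t * (g (e 0) 0 * g (e 0) 0) = s * g (e 1) 1 :=
      mul_right_cancel₀ h22 (by linear_combination q4 - t * w44 - t * (g (e 0) 0) * w33)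
    -- equation 2
    have q6 := congrFun H14 6
    rw [mu_c6, Pi.smul_apply, smul_eq_mul, hB0, w40, w41, w42, w43] at q6
    have E2 : (t - 1) * (g (e 0) 0 * g (e 0) 0) = (s - 1) * g (e 1) 1 :=
      mul_right_cancel₀ (right_ne_zero_of_mul h55)
        (by linear_combination q6 - (t - 1) * w66 - (t - 1) * (g (e 0) 0) * w55)
    have hb : g (e 1) 1 = g (e 0) 0 * g (e 0) 0 := by linear_combination E2 - E1
    rw [hb] at E1
    exact mul_right_cancel₀ (mul_ne_zero ha ha) E1
  · rintro rfl
    exact ⟨LinearEquiv.refl ℝ _, fun x y => rfl⟩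

end
end

section
/- Each Lie algebra n_t = (ℝ^8, μ_t) with μ_t(e_1,e_j) = e_{j+1} (j = 2,…,7), μ_t(e_2,e_3) = t e_5, μ_t(e_2,e_4) = t e_6, μ_t(e_2,e_5) = (t−1) e_7, μ_t(e_2,e_6) = (t−2) e_8, μ_t(e_3,e_4) = e_7, μ_t(e_3,e_5) = e_8 is filiform, i.e., 7-step nilpotent of dimension 8: the lower central series satisfies C_j(n_t) = span(e_{j+2},…,e_8) for j = 1,…,6 and C_7(n_t) = 0. -/
noncomputable section

/-- The lower central series of `(ℝ⁸, μ_t)`: `C 0 = ⊤`, `C (n+1) = [n, C n]`. -/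
def lcs (t : ℝ) : ℕ → Submodule ℝ (Fin 8 → ℝ)
  | 0 => ⊤
  | n + 1 => Submodule.span ℝ {z | ∃ x y, y ∈ lcs t n ∧ z = mu t x y}

lemma e_zero (k : ℕ) (m : Fin 8) (h : (m : ℕ) ≠ k) : e k m = 0 := if_neg h

lemma e_one (k : ℕ) (m : Fin 8) (h : (m : ℕ) = k) : e k m = 1 := if_pos h

lemma cplus_zero (t : ℝ) (i j : ℕ) (m : Fin 8) (h : (m : ℕ) ≤ j) : cplus t i j m = 0 := by
  unfold cplus
  split_ifs with h1 h2 h3 h4 h5 h6 h7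
  · exact e_zero _ _ (by omega)
  · show t * e 4 m = 0
    rw [e_zero _ _ (by omega), mul_zero]
  · show t * e 5 m = 0
    rw [e_zero _ _ (by omega), mul_zero]
  · show (t - 1) * e 6 m = 0
    rw [e_zero _ _ (by omega), mul_zero]
  · show (t - 2) * e 7 m = 0
    rw [e_zero _ _ (by omega), mul_zero]
  · exact e_zero _ _ (by omega)
  · exact e_zero _ _ (by omega)
  · rfl

lemma cst_zero (t : ℝ) (i j : ℕ) (m : Fin 8)
    (h : (m : ℕ) ≤ i ∨ (m : ℕ) ≤ j ∨ i = j) : cst t i j m = 0 := by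
  unfold cst
  split_ifs with h1 h2
  · exact cplus_zero t i j m (by omega)
  · show -(cplus t j i m) = 0
    rw [cplus_zero t j i m (by omega), neg_zero]
  · rfl

lemma mu_e (t : ℝ) (a b : Fin 8) :
    mu t (e (a : ℕ)) (e (b : ℕ)) = cst t (a : ℕ) (b : ℕ) := by
  funext k
  unfold mu
  rw [Fintype.sum_eq_single a (fun i hi => Finset.sum_eq_zero fun j _ => by
    rw [e_zero _ _ (fun h => hi (Fin.ext h)), zero_mul, zero_mul]),
    Fintype.sum_eq_single b (fun j hj => by
      rw [e_zero (b : ℕ) j (fun h => hj (Fin.ext h)), mul_zero, zero_mul])]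
  rw [e_one _ _ rfl, e_one _ _ rfl, one_mul, one_mul]

lemma mu_e' (t : ℝ) (a b : ℕ) (ha : a < 8) (hb : b < 8) :
    mu t (e a) (e b) = cst t a b := mu_e t ⟨a, ha⟩ ⟨b, hb⟩

/-- For `2 ≤ k ≤ 7`, `μ_t(e₁, e_{k-1}) = e_k`. -/
lemma key (t : ℝ) (k : ℕ) (h2 : 2 ≤ k) (h7 : k ≤ 7) :
    mu t (e 0) (e (k - 1)) = e k := by
  rw [mu_e' t 0 (k - 1) (by omega) (by omega)]
  have h1 : 0 < k - 1 := by omega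
  rw [cst, if_pos h1]
  have h2' : 0 = 0 ∧ 1 ≤ k - 1 ∧ k - 1 ≤ 6 := ⟨rfl, by omega, by omega⟩
  rw [cplus, if_pos h2']
  have h3 : k - 1 + 1 = k := by omega
  rw [h3]

/-- The submodule of vectors vanishing on coordinates `0, …, j`. -/
def V (j : ℕ) : Submodule ℝ (Fin 8 → ℝ) where
  carrier := {v | ∀ m : Fin 8, (m : ℕ) ≤ j → v m = 0}
  add_mem' := by
    intro a b ha hb m hm
    show a m + b m = 0
    rw [ha m hm, hb m hm, add_zero]
  zero_mem' := by intro m hm; rfl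
  smul_mem' := by
    intro c a ha m hm
    show c * a m = 0
    rw [ha m hm, mul_zero]

lemma lcsA (t : ℝ) : ∀ n, 1 ≤ n → lcs t n ≤ V n := by
  intro n
  induction n with
  | zero => omega
  | succ n ih =>
    intro _
    rw [lcs]
    rw [Submodule.span_le]
    rintro z ⟨x, y, hy, rfl⟩ m hm
    apply Finset.sum_eq_zero
    intro i _
    apply Finset.sum_eq_zero
    intro j _
    by_cases hj : (j : ℕ) ≤ n
    · rcases Nat.eq_zero_or_pos n with h | h
      · rw [cst_zero t _ _ m (by omega), mul_zero]
      · rw [ih h hy j hj, mul_zero, zero_mul]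
    · rw [cst_zero t _ _ m (by omega), mul_zero]

lemma e_mem_lcs (t : ℝ) : ∀ j, 1 ≤ j → ∀ k, j + 1 ≤ k → k ≤ 7 → e k ∈ lcs t j := by
  intro j
  induction j with
  | zero => omega
  | succ n ih =>
    intro _ k hk1 hk7
    have hy : e (k - 1) ∈ lcs t n := by
      rcases Nat.eq_zero_or_pos n with h | h
      · subst h
        rw [lcs]
        exact Submodule.mem_top
      · exact ih h (k - 1) (by omega) (by omega)
    rw [lcs]
    exact Submodule.subset_span ⟨e 0, e (k - 1), hy, (key t k (by omega) hk7).symm⟩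

lemma span_eq_V (j : ℕ) (_hj : j ≤ 7) :
    Submodule.span ℝ {v | ∃ k : ℕ, j + 1 ≤ k ∧ k ≤ 7 ∧ v = e k} = V j := by
  apply le_antisymm
  · rw [Submodule.span_le]
    rintro v ⟨k, hk1, hk7, rfl⟩ m hm
    exact e_zero k m (by omega)
  · intro v hv
    have hrep : v = ∑ m : Fin 8, v m • e (m : ℕ) := by
      funext p
      rw [Finset.sum_apply]
      rw [Fintype.sum_eq_single p (fun m hm => by
        show v m • e (m : ℕ) p = 0
        rw [smul_eq_mul, e_zero _ _ (fun h => hm (Fin.ext h.symm)), mul_zero])]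
      show v p = v p • e (p : ℕ) p
      rw [smul_eq_mul, e_one _ _ rfl, mul_one]
    rw [hrep]
    apply Submodule.sum_mem
    intro m _
    by_cases hm : (m : ℕ) ≤ j
    · rw [hv m hm, zero_smul]
      exact Submodule.zero_mem _
    · exact Submodule.smul_mem _ _
        (Submodule.subset_span ⟨(m : ℕ), by omega, by omega, rfl⟩)

/-- `(ℝ⁸, μ_t)` is filiform: `C_j = span(e_{j+2}, …, e_8)` for `j = 1, …, 6`
(`0`-based: spanned by `e k` for `j + 1 ≤ k ≤ 7`) and `C_7 = 0`. -/
theorem stmt7 (t : ℝ) :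
    (∀ j : ℕ, 1 ≤ j → j ≤ 6 →
      lcs t j = Submodule.span ℝ {v | ∃ k : ℕ, j + 1 ≤ k ∧ k ≤ 7 ∧ v = e k}) ∧
    lcs t 7 = ⊥ := by
  constructor
  · intro j hj1 hj6
    apply le_antisymm
    · calc lcs t j ≤ V j := lcsA t j hj1
        _ = _ := (span_eq_V j (by omega)).symm
    · rw [Submodule.span_le]
      rintro v ⟨k, hk1, hk7, rfl⟩
      exact e_mem_lcs t j hj1 k hk1 hk7
  · apply le_antisymm
    · intro v hv
      have h7 : v ∈ V 7 := lcsA t 7 (by norm_num) hv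
      have : v = 0 := funext fun m => h7 m (by omega)
      rw [this]
      exact Submodule.zero_mem _
    · exact bot_le
end
end

section
/- In the Lie algebra m_{1,0} = (ℝ^8, μ_{1,0}) with bracket μ(e_1,e_j) = e_{j+1} for j = 2,…,7, μ(e_2,e_i) = e_{i+2} for i = 3,…,6, there exists an element x (e.g. x = e_3) with dim Im(ad_x) = 2, while in the Lie algebra (ℝ^8, μ_{t,1}) with μ(e_1,e_j)=e_{j+1} (j=2,…,7), μ(e_2,e_3)=t e_5, μ(e_2,e_4)=t e_6, μ(e_2,e_5)=(t−1)e_7, μ(e_2,e_6)=(t−2)e_8, μ(e_3,e_4)=e_7, μ(e_3,e_5)=e_8, no element of the form x = c_1 e_1 + c_2 e_2 + c_3 e_3 has dim Im(ad_x) = 2 unless the corresponding element in m_{1,0} also fails; consequently μ_{t,1} is not isomorphic to μ_{1,0} for any t ∈ ℝ. -/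
noncomputable section

/-- Structure constants of `μ_{1,0}` (the algebra `m₂(8)`) for `i < j`. -/
def cplus10 (i j : ℕ) : Fin 8 → ℝ :=
  if i = 0 ∧ 1 ≤ j ∧ j ≤ 6 then e (j + 1)
  else if i = 1 ∧ 2 ≤ j ∧ j ≤ 5 then e (j + 2)
  else 0

def cst10 (i j : ℕ) : Fin 8 → ℝ :=
  if i < j then cplus10 i j else if j < i then -cplus10 j i else 0

/-- The bracket `μ_{1,0}` of `m₂(8)`. -/
def mu10 (x y : Fin 8 → ℝ) : Fin 8 → ℝ :=
  fun k => ∑ i : Fin 8, ∑ j : Fin 8, x i * y j * cst10 (i : ℕ) (j : ℕ) k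

/-- Dimension of the image of `ad_x` for the bracket `β`. -/
def adRank (β : (Fin 8 → ℝ) → (Fin 8 → ℝ) → (Fin 8 → ℝ)) (x : Fin 8 → ℝ) : ℕ :=
  Module.finrank ℝ (Submodule.span ℝ (Set.range (fun y => β x y)))

/-!
Indices are 0-based: `e k` is the paper's `e_{k+1}`; below we use the paper's numbering.

In `μ_{1,0}` the image of `ad_{e₃}` is `span{e₄, e₅}`. In `μ_{t,1}`, as soon as one of the
coordinates `x₁, x₂, x₃` of `x` is nonzero, three columns of `ad_x` are in echelon form (for `x₂`
one uses that at most one of the diagonal entries `t x₂, (t-1) x₂, (t-2) x₂` of `ad_x` on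
`e₄, e₅, e₆` vanishes), so `ad_x` has rank at least `3`. Thus every rank-2 element of `μ_{t,1}`
lies in `span{e₄, …, e₈} = ad_{e₁}² (ℝ⁸)`. An isomorphism onto `μ_{1,0}` would carry such an
element, of the form `[e₁, [e₁, y]]`, to the rank-2 element `e₃`; but every double bracket of
`μ_{1,0}` has vanishing `e₃`-coordinate.
-/

theorem linearIndependent_finCons_of_apply_ne_zero {K ι : Type*} [Field K] {n : ℕ}
    {a : ι → K} {v : Fin n → ι → K} {k : ι} (ha : a k ≠ 0) (hv : ∀ i, v i k = 0)
    (hli : LinearIndependent K v) : LinearIndependent K (Fin.cons a v : Fin (n + 1) → ι → K) := by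
  refine linearIndependent_finCons.2 ⟨hli, fun hspan => ha ?_⟩
  have hker : Submodule.span K (Set.range v) ≤ LinearMap.ker (LinearMap.proj k) :=
    Submodule.span_le.2 (Set.range_subset_iff.2 hv)
  exact hker hspan

theorem le_finrank_span_of_linearIndependent {K V : Type*} [Field K] [AddCommGroup V]
    [Module K V] [FiniteDimensional K V] {n : ℕ} {v : Fin n → V} (hv : LinearIndependent K v)
    {s : Set V} (hs : Set.range v ⊆ s) : n ≤ Module.finrank K (Submodule.span K s) := by
  calc n = Module.finrank K (Submodule.span K (Set.range v)) := by
        rw [finrank_span_eq_card hv, Fintype.card_fin]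
    _ ≤ _ := Submodule.finrank_mono (Submodule.span_mono hs)

theorem adRank_map_of_linearEquiv {β β' : (Fin 8 → ℝ) → (Fin 8 → ℝ) → (Fin 8 → ℝ)}
    (g : (Fin 8 → ℝ) ≃ₗ[ℝ] (Fin 8 → ℝ)) (hg : ∀ x y, g (β x y) = β' (g x) (g y))
    (x : Fin 8 → ℝ) : adRank β' (g x) = adRank β x := by
  have hrange : Set.range (β' (g x)) = g '' Set.range (β x) := by
    ext v
    constructor
    · rintro ⟨u, rfl⟩
      exact ⟨β x (g.symm u), ⟨g.symm u, rfl⟩, by rw [hg, g.apply_symm_apply]⟩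
    · rintro ⟨w, ⟨u, rfl⟩, rfl⟩
      exact ⟨g u, (hg x u).symm⟩
  rw [adRank, adRank, hrange, Submodule.span_image_linearEquiv]
  exact LinearEquiv.finrank_map_eq g _

theorem three_le_adRank_of_pivots {β : (Fin 8 → ℝ) → (Fin 8 → ℝ) → (Fin 8 → ℝ)}
    {x y₁ y₂ y₃ : Fin 8 → ℝ} {i j k : Fin 8}
    (h₁ : β x y₁ i ≠ 0) (h₂ : β x y₂ j ≠ 0) (h₃ : β x y₃ k ≠ 0)
    (h₂i : β x y₂ i = 0) (h₃i : β x y₃ i = 0) (h₃j : β x y₃ j = 0) : 3 ≤ adRank β x := by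
  have hli : LinearIndependent ℝ ![β x y₁, β x y₂, β x y₃] :=
    linearIndependent_finCons_of_apply_ne_zero h₁ (Fin.forall_fin_two.2 ⟨h₂i, h₃i⟩) <|
      linearIndependent_finCons_of_apply_ne_zero h₂ (Fin.forall_fin_one.2 h₃j) <|
        linearIndependent_unique_iff.2 fun h => h₃ (congrFun h k)
  refine le_finrank_span_of_linearIndependent hli (Set.range_subset_iff.2 fun m => ?_)
  fin_cases m <;> exact ⟨_, rfl⟩

section Columns

variable (t : ℝ) (x : Fin 8 → ℝ)

lemma mu_e_zero :
    mu t x (e 0) = -(x 1 • e 2 + x 2 • e 3 + x 3 • e 4 + x 4 • e 5 + x 5 • e 6 + x 6 • e 7) := by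
  funext k
  fin_cases k <;> simp [mu, cst, cplus, e, Fin.sum_univ_eight]

lemma mu_e_three : mu t x (e 3) = x 0 • e 4 + (t * x 1) • e 5 + x 2 • e 6 := by
  funext k
  fin_cases k <;> simp [mu, cst, cplus, e, Fin.sum_univ_eight, mul_comm]

lemma mu_e_four : mu t x (e 4) = x 0 • e 5 + ((t - 1) * x 1) • e 6 + x 2 • e 7 := by
  funext k
  fin_cases k <;> simp [mu, cst, cplus, e, Fin.sum_univ_eight, mul_comm]

lemma mu_e_five : mu t x (e 5) = x 0 • e 6 + ((t - 2) * x 1) • e 7 := by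
  funext k
  fin_cases k <;> simp [mu, cst, cplus, e, Fin.sum_univ_eight, mul_comm]

end Columns

section RankTwo

variable {t : ℝ} {x : Fin 8 → ℝ}

lemma three_le_adRank_mu_of_apply_zero_ne_zero (h : x 0 ≠ 0) : 3 ≤ adRank (mu t) x :=
  three_le_adRank_of_pivots (i := 4) (j := 5) (k := 6) (y₁ := e 3) (y₂ := e 4) (y₃ := e 5)
    (by simpa [mu_e_three, e]) (by simpa [mu_e_four, e]) (by simpa [mu_e_five, e])
    (by simp [mu_e_four, e]) (by simp [mu_e_five, e]) (by simp [mu_e_five, e])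

lemma three_le_adRank_mu_of_apply_one_ne_zero (h₀ : x 0 = 0) (h : x 1 ≠ 0) :
    3 ≤ adRank (mu t) x := by
  have hcol₀ : mu t x (e 0) 2 ≠ 0 := by simpa [mu_e_zero, e]
  rcases eq_or_ne t 0 with rfl | ht₀
  · exact three_le_adRank_of_pivots (i := 2) (j := 6) (k := 7) (y₂ := e 4) (y₃ := e 5) hcol₀
      (by simpa [mu_e_four, e]) (by norm_num [mu_e_five, e, h])
      (by simp [mu_e_four, e]) (by simp [mu_e_five, e]) (by simp [mu_e_five, e, h₀])
  rcases eq_or_ne t 1 with rfl | ht₁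
  · exact three_le_adRank_of_pivots (i := 2) (j := 5) (k := 7) (y₂ := e 3) (y₃ := e 5) hcol₀
      (by simpa [mu_e_three, e]) (by norm_num [mu_e_five, e, h])
      (by simp [mu_e_three, e]) (by simp [mu_e_five, e]) (by simp [mu_e_five, e])
  exact three_le_adRank_of_pivots (i := 2) (j := 5) (k := 6) (y₂ := e 3) (y₃ := e 4) hcol₀
    (by simpa [mu_e_three, e] using mul_ne_zero ht₀ h)
    (by simpa [mu_e_four, e] using mul_ne_zero (sub_ne_zero.2 ht₁) h)
    (by simp [mu_e_three, e]) (by simp [mu_e_four, e]) (by simp [mu_e_four, e, h₀])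

lemma three_le_adRank_mu_of_apply_two_ne_zero (h₀ : x 0 = 0) (h₁ : x 1 = 0) (h : x 2 ≠ 0) :
    3 ≤ adRank (mu t) x :=
  three_le_adRank_of_pivots (i := 3) (j := 6) (k := 7) (y₁ := e 0) (y₂ := e 3) (y₃ := e 4)
    (by simpa [mu_e_zero, e]) (by simpa [mu_e_three, e]) (by simpa [mu_e_four, e])
    (by simp [mu_e_three, e, h₀]) (by simp [mu_e_four, e]) (by simp [mu_e_four, e, h₁])

end RankTwo

lemma apply_eq_zero_of_adRank_mu_eq_two {t : ℝ} {x : Fin 8 → ℝ} (h : adRank (mu t) x = 2) :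
    x 0 = 0 ∧ x 1 = 0 ∧ x 2 = 0 := by
  have h₀ : x 0 = 0 := by_contra fun hx =>
    (three_le_adRank_mu_of_apply_zero_ne_zero hx).not_gt (by rw [h]; norm_num)
  have h₁ : x 1 = 0 := by_contra fun hx =>
    (three_le_adRank_mu_of_apply_one_ne_zero h₀ hx).not_gt (by rw [h]; norm_num)
  have h₂ : x 2 = 0 := by_contra fun hx =>
    (three_le_adRank_mu_of_apply_two_ne_zero h₀ h₁ hx).not_gt (by rw [h]; norm_num)
  exact ⟨h₀, h₁, h₂⟩

lemma adRank_mu_zero (t : ℝ) : adRank (mu t) 0 = 0 := by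
  have hzero : mu t 0 = 0 := by
    funext y k
    simp [mu]
  simp [adRank, hzero]

lemma exists_mu_e_zero_mu_e_zero_eq {t : ℝ} {x : Fin 8 → ℝ} (h₀ : x 0 = 0) (h₁ : x 1 = 0)
    (h₂ : x 2 = 0) : ∃ y, mu t (e 0) (mu t (e 0) y) = x := by
  refine ⟨x 3 • e 1 + x 4 • e 2 + x 5 • e 3 + x 6 • e 4 + x 7 • e 5, ?_⟩
  funext k
  fin_cases k <;> simp [mu, cst, cplus, e, Fin.sum_univ_eight, h₀, h₁, h₂]

lemma mu10_apply_zero (a b : Fin 8 → ℝ) : mu10 a b 0 = 0 := by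
  simp [mu10, cst10, cplus10, e, Fin.sum_univ_eight]

lemma mu10_apply_one (a b : Fin 8 → ℝ) : mu10 a b 1 = 0 := by
  simp [mu10, cst10, cplus10, e, Fin.sum_univ_eight]

lemma mu10_apply_two (a b : Fin 8 → ℝ) : mu10 a b 2 = a 0 * b 1 - a 1 * b 0 := by
  simp [mu10, cst10, cplus10, e, Fin.sum_univ_eight]
  ring

lemma mu10_mu10_apply_two (a b c : Fin 8 → ℝ) : mu10 a (mu10 b c) 2 = 0 := by
  simp only [mu10_apply_two, mu10_apply_zero, mu10_apply_one, mul_zero, sub_zero]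

lemma mu10_e_two (y : Fin 8 → ℝ) : mu10 (e 2) y = (-y 0) • e 3 + (-y 1) • e 4 := by
  funext k
  fin_cases k <;> simp [mu10, cst10, cplus10, e, Fin.sum_univ_eight]

lemma adRank_mu10_e_two : adRank mu10 (e 2) = 2 := by
  refine le_antisymm ?_ ?_
  · have hrange : Set.range (mu10 (e 2)) ⊆ Submodule.span ℝ (Set.range ![e 3, e 4]) := by
      rintro _ ⟨y, rfl⟩
      rw [mu10_e_two]
      exact add_mem (Submodule.smul_mem _ _ (Submodule.subset_span ⟨0, rfl⟩))
        (Submodule.smul_mem _ _ (Submodule.subset_span ⟨1, rfl⟩))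
    calc adRank mu10 (e 2) ≤ Module.finrank ℝ (Submodule.span ℝ (Set.range ![e 3, e 4])) :=
          Submodule.finrank_mono (Submodule.span_le.2 hrange)
      _ ≤ 2 := (finrank_range_le_card _).trans_eq (Fintype.card_fin 2)
  · have hli : LinearIndependent ℝ ![mu10 (e 2) (e 0), mu10 (e 2) (e 1)] :=
      linearIndependent_finCons_of_apply_ne_zero (k := 3) (by simp [mu10_e_two, e])
        (Fin.forall_fin_one.2 (by simp [mu10_e_two, e])) <|
        linearIndependent_unique_iff.2 fun h => by simpa [mu10_e_two, e] using congrFun h 4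
    refine le_finrank_span_of_linearIndependent hli (Set.range_subset_iff.2 fun m => ?_)
    fin_cases m <;> exact ⟨_, rfl⟩

/-- In `m_{1,0}` some element (e.g. `e₃`) has `dim Im(ad_x) = 2`, while in `μ_{t,1}` no
element `c₁e₁ + c₂e₂ + c₃e₃` has `dim Im(ad_x) = 2`; consequently `μ_{t,1}` is not
isomorphic to `μ_{1,0}` for any `t`. -/
theorem stmt8 (t : ℝ) :
    (∃ x : Fin 8 → ℝ, adRank mu10 x = 2) ∧
    (∀ c₁ c₂ c₃ : ℝ, adRank (mu t) (c₁ • e 0 + c₂ • e 1 + c₃ • e 2) ≠ 2) ∧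
    ¬ ∃ g : (Fin 8 → ℝ) ≃ₗ[ℝ] (Fin 8 → ℝ), ∀ x y, g (mu t x y) = mu10 (g x) (g y) := by
  refine ⟨⟨e 2, adRank_mu10_e_two⟩, fun c₁ c₂ c₃ h => ?_, ?_⟩
  · obtain ⟨h₁, h₂, h₃⟩ := apply_eq_zero_of_adRank_mu_eq_two h
    have hc₁ : c₁ = 0 := by simpa [e] using h₁
    have hc₂ : c₂ = 0 := by simpa [e] using h₂
    have hc₃ : c₃ = 0 := by simpa [e] using h₃
    simp [hc₁, hc₂, hc₃, adRank_mu_zero] at h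
  · rintro ⟨g, hg⟩
    have hrank : adRank (mu t) (g.symm (e 2)) = 2 := by
      rw [← adRank_map_of_linearEquiv g hg, g.apply_symm_apply, adRank_mu10_e_two]
    obtain ⟨h₀, h₁, h₂⟩ := apply_eq_zero_of_adRank_mu_eq_two hrank
    obtain ⟨y, hy⟩ := exists_mu_e_zero_mu_e_zero_eq (t := t) h₀ h₁ h₂
    have hcoord := congrFun (congrArg g hy) 2
    rw [g.apply_symm_apply, hg, hg, mu10_mu10_apply_two] at hcoord
    simp [e] at hcoord

end
end

section
/- Let U be the 9×9 symmetric matrix with rows [3,0,1,1,1,1,0,1,1], [0,3,0,1,1,1,1,−1,0], [1,0,3,0,1,1,0,1,−1], [1,1,0,3,0,1,1,0,1], [1,1,1,0,3,0,−1,1,0], [1,1,1,1,0,3,0,−1,1], [0,1,0,1,−1,0,3,1,1], [1,−1,1,0,1,−1,1,3,1], [1,0,−1,1,0,1,1,1,3]. Then there is no vector v ∈ ℝ^9 with all coordinates strictly positive satisfying U v = (1,1,1,1,1,1,1,1,1)^T. In fact, every solution v of U v = [1]_9 has first coordinate equal to −9/281. -/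
noncomputable section

/-- The Gram matrix `U = YᵀY` arising from the root vectors of `c_{1,0}(8)`. -/
def U : Matrix (Fin 9) (Fin 9) ℝ :=
  !![3,0,1,1,1,1,0,1,1;
     0,3,0,1,1,1,1,-1,0;
     1,0,3,0,1,1,0,1,-1;
     1,1,0,3,0,1,1,0,1;
     1,1,1,0,3,0,-1,1,0;
     1,1,1,1,0,3,0,-1,1;
     0,1,0,1,-1,0,3,1,1;
     1,-1,1,0,1,-1,1,3,1;
     1,0,-1,1,0,1,1,1,3]

private lemma cons_val_five' {α : Type*} {m : ℕ} (x : α)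
    (u : Fin (m + 5) → α) : Matrix.vecCons x u 5 =
      Matrix.vecHead (Matrix.vecTail (Matrix.vecTail (Matrix.vecTail (Matrix.vecTail u)))) :=
  rfl

private lemma cons_val_six' {α : Type*} {m : ℕ} (x : α)
    (u : Fin (m + 6) → α) : Matrix.vecCons x u 6 =
      Matrix.vecHead (Matrix.vecTail (Matrix.vecTail (Matrix.vecTail (Matrix.vecTail
        (Matrix.vecTail u))))) :=
  rfl

private lemma cons_val_seven' {α : Type*} {m : ℕ} (x : α)
    (u : Fin (m + 7) → α) : Matrix.vecCons x u 7 =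
      Matrix.vecHead (Matrix.vecTail (Matrix.vecTail (Matrix.vecTail (Matrix.vecTail
        (Matrix.vecTail (Matrix.vecTail u)))))) :=
  rfl

private lemma cons_val_eight' {α : Type*} {m : ℕ} (x : α)
    (u : Fin (m + 8) → α) : Matrix.vecCons x u 8 =
      Matrix.vecHead (Matrix.vecTail (Matrix.vecTail (Matrix.vecTail (Matrix.vecTail
        (Matrix.vecTail (Matrix.vecTail (Matrix.vecTail u))))))) :=
  rfl

/-- Every solution of `U v = [1]₉` has first coordinate `-9/281`; in particular there is
no solution with all coordinates strictly positive. -/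
theorem stmt13 :
    (∀ v : Fin 9 → ℝ, U.mulVec v = (fun _ => 1) → v 0 = -9 / 281) ∧
    ¬ ∃ v : Fin 9 → ℝ, (∀ i, 0 < v i) ∧ U.mulVec v = (fun _ => 1) := by
  have key : ∀ v : Fin 9 → ℝ, U.mulVec v = (fun _ => 1) → v 0 = -9 / 281 := by
    intro v h
    have e : ∀ i, U.mulVec v i = 1 := fun i => congrFun h i
    have e0 := e 0; have e1 := e 1; have e2 := e 2; have e3 := e 3
    have e4 := e 4; have e5 := e 5; have e6 := e 6
    simp [U, Matrix.mulVec, dotProduct, Fin.sum_univ_succ,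
      cons_val_five', cons_val_six', cons_val_seven', cons_val_eight']
      at e0 e1 e2 e3 e4 e5 e6
    linarith
  refine ⟨key, ?_⟩
  rintro ⟨v, hpos, hv⟩
  have h1 := key v hv
  have h2 := hpos 0
  linarith

end
end
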